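/- Let Y ∈ ℝ^n, X ∈ ℝ^{n×p} with X′X invertible, Λ = (λ₁,…,λ_p) with λ₁ ≥ … ≥ λ_p ≥ 0 and λ₁ > 0, and let r(b,π) = ½‖Y − Xb‖₂² + π′b. Let π* be any minimizer over C_Λ of π ↦ (X′Y − π)′(X′X)^{-1}(X′Y − π) and β* = (X′X)^{-1}(X′Y − π*). Then (β*, π*) is a saddle point of r on M × C_Λ, where M = {b ∈ ℝ^p : ‖b‖₂² ≤ p‖Y‖₂⁴/(4λ₁²)}: r(β*, π) ≤ r(β*, π*) ≤ r(b, π*) for all b ∈ M and π ∈ C_Λ. -/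

import Mathlib

/-!
The map `π ↦ (X'Y - π)'(X'X)⁻¹(X'Y - π)` is a quadratic whose gradient at `π*` is `-2β*`, so
minimality over the convex set `C_Λ` yields the variational inequality `π'β* ≤ π*'β*` on `C_Λ`,
which is the left saddle inequality. The normal equations `X'(Y - Xβ*) = π*` make `β*` a global
minimizer of `r(·, π*)`; comparing with `b = 0` gives `π*'β* ≤ ½‖Y‖²`. Testing the variational
inequality with `π = ±λ₁eᵢ ∈ C_Λ` then bounds `λ₁|β*ᵢ| ≤ ½‖Y‖²` for each `i`, whence `β* ∈ M`.
-/

open Matrix Filter Topology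

/-- The unit ball `C_Λ` of the dual SLOPE norm: for every `k`, the sum of the `k`
largest values among `|π j|` is at most the sum of the first `k` entries of `Λ`. -/
def dualBall {p : ℕ} (Λ : Fin p → ℝ) : Set (Fin p → ℝ) :=
  {π | ∀ S : Finset (Fin p),
    ∑ j ∈ S, |π j| ≤ ∑ j ∈ Finset.univ.filter (fun j : Fin p => (j : ℕ) < S.card), Λ j}

theorem convex_dualBall {p : ℕ} (Λ : Fin p → ℝ) : Convex ℝ (dualBall Λ) := by
  intro a ha b hb s t hs ht hst S
  calc ∑ j ∈ S, |(s • a + t • b) j|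
      ≤ ∑ j ∈ S, (s * |a j| + t * |b j|) := Finset.sum_le_sum fun j _ => by
        simpa [abs_mul, abs_of_nonneg hs, abs_of_nonneg ht] using abs_add_le (s * a j) (t * b j)
    _ = s * ∑ j ∈ S, |a j| + t * ∑ j ∈ S, |b j| := by
        rw [Finset.sum_add_distrib, Finset.mul_sum, Finset.mul_sum]
    _ ≤ (s + t) * ∑ j ∈ Finset.univ.filter (fun j : Fin p => (j : ℕ) < S.card), Λ j := by
        rw [add_mul]
        gcongr
        exacts [ha S, hb S]
    _ = _ := by rw [hst, one_mul]

theorem single_mem_dualBall {p : ℕ} (hp : 0 < p) {Λ : Fin p → ℝ} (hΛ : ∀ i, 0 ≤ Λ i)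
    (i : Fin p) {a : ℝ} (ha : |a| ≤ Λ ⟨0, hp⟩) : Pi.single i a ∈ dualBall Λ := by
  intro S
  have habs : ∀ j, |Pi.single (M := fun _ => ℝ) i a j| = Pi.single (M := fun _ => ℝ) i |a| j :=
    fun j => by rcases eq_or_ne j i with rfl | hj <;> simp [*]
  simp only [habs, Finset.sum_pi_single']
  split_ifs with hi
  · refine ha.trans (Finset.single_le_sum (fun j _ => hΛ j) ?_)
    simpa using Finset.card_pos.2 ⟨i, hi⟩
  · exact Finset.sum_nonneg fun j _ => hΛ j

theorem sum_sq_le_of_forall_dualBall_dotProduct_le {p : ℕ} (hp : 0 < p) {Λ : Fin p → ℝ}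
    (hΛ : ∀ i, 0 ≤ Λ i) (hΛ₀ : 0 < Λ ⟨0, hp⟩) {β : Fin p → ℝ} {K : ℝ}
    (hK : ∀ π ∈ dualBall Λ, π ⬝ᵥ β ≤ K) :
    ∑ i, β i ^ 2 ≤ p * (K ^ 2 / Λ ⟨0, hp⟩ ^ 2) := by
  have hcoord : ∀ i, β i ^ 2 ≤ K ^ 2 / Λ ⟨0, hp⟩ ^ 2 := by
    intro i
    have hpos := hK _ (single_mem_dualBall hp hΛ i (abs_of_pos hΛ₀).le)
    have hneg := hK _ (single_mem_dualBall hp hΛ i (a := -Λ ⟨0, hp⟩) (by simp [abs_of_pos hΛ₀]))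
    rw [single_dotProduct] at hpos hneg
    rw [le_div_iff₀ (by positivity), ← mul_pow]
    exact sq_le_sq' (by linarith) (by linarith)
  calc ∑ i, β i ^ 2 ≤ ∑ _i : Fin p, K ^ 2 / Λ ⟨0, hp⟩ ^ 2 := Finset.sum_le_sum fun i _ => hcoord i
    _ = p * (K ^ 2 / Λ ⟨0, hp⟩ ^ 2) := by simp

theorem dotProduct_mulVec_sub_smul {ι : Type*} [Fintype ι] {B : Matrix ι ι ℝ} (hB : B.IsSymm)
    (u d : ι → ℝ) (t : ℝ) :
    (u - t • d) ⬝ᵥ (B *ᵥ (u - t • d)) =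
      u ⬝ᵥ (B *ᵥ u) - 2 * t * (d ⬝ᵥ (B *ᵥ u)) + t ^ 2 * (d ⬝ᵥ (B *ᵥ d)) := by
  have hswap : u ⬝ᵥ (B *ᵥ d) = d ⬝ᵥ (B *ᵥ u) := by
    rw [dotProduct_mulVec, ← mulVec_transpose, hB.eq, dotProduct_comm]
  simp only [mulVec_sub, mulVec_smul, dotProduct_sub, sub_dotProduct, dotProduct_smul,
    smul_dotProduct, smul_eq_mul, hswap]
  ring

theorem Convex.dotProduct_mulVec_sub_le_of_isMinOn {ι : Type*} [Fintype ι] {s : Set (ι → ℝ)}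
    (hs : Convex ℝ s) {B : Matrix ι ι ℝ} (hB : B.IsSymm) {c x y : ι → ℝ}
    (hmin : IsMinOn (fun π => (c - π) ⬝ᵥ (B *ᵥ (c - π))) s x) (hx : x ∈ s) (hy : y ∈ s) :
    y ⬝ᵥ (B *ᵥ (c - x)) ≤ x ⬝ᵥ (B *ᵥ (c - x)) := by
  have hslope : ∀ t ∈ Set.Ioc (0 : ℝ) 1,
      2 * ((y - x) ⬝ᵥ (B *ᵥ (c - x))) ≤ t * ((y - x) ⬝ᵥ (B *ᵥ (y - x))) := by
    rintro t ⟨ht₀, ht₁⟩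
    have h := isMinOn_iff.1 hmin _ (hs.add_smul_sub_mem hx hy ⟨ht₀.le, ht₁⟩)
    rw [sub_add_eq_sub_sub, dotProduct_mulVec_sub_smul hB] at h
    exact le_of_mul_le_mul_left (by linarith) ht₀
  have hlim : Tendsto (fun t => t * ((y - x) ⬝ᵥ (B *ᵥ (y - x)))) (𝓝[>] 0) (𝓝 0) :=
    ((continuous_id.mul_const _).tendsto' 0 0 (zero_mul _)).mono_left nhdsWithin_le_nhds
  have h := ge_of_tendsto hlim (eventually_of_mem (Ioc_mem_nhdsGT one_pos) hslope)
  rw [sub_dotProduct] at h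
  linarith

section Lagrangian

variable {m n : Type*} [Fintype m] [Fintype n]

noncomputable def lagrangian (X : Matrix m n ℝ) (Y : m → ℝ) (b π : n → ℝ) : ℝ :=
  1 / 2 * ((Y - X *ᵥ b) ⬝ᵥ (Y - X *ᵥ b)) + π ⬝ᵥ b

theorem lagrangian_zero (X : Matrix m n ℝ) (Y : m → ℝ) (π : n → ℝ) :
    lagrangian X Y 0 π = 1 / 2 * (Y ⬝ᵥ Y) := by
  simp [lagrangian]

theorem dotProduct_le_lagrangian (X : Matrix m n ℝ) (Y : m → ℝ) (b π : n → ℝ) :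
    π ⬝ᵥ b ≤ lagrangian X Y b π := by
  have : 0 ≤ (Y - X *ᵥ b) ⬝ᵥ (Y - X *ᵥ b) := Finset.sum_nonneg fun i _ => mul_self_nonneg _
  unfold lagrangian
  linarith

theorem lagrangian_le_of_transpose_mulVec_sub_eq {X : Matrix m n ℝ} {Y : m → ℝ} {β π : n → ℝ}
    (h : Xᵀ *ᵥ (Y - X *ᵥ β) = π) (b : n → ℝ) : lagrangian X Y β π ≤ lagrangian X Y b π := by
  have hsplit : Y - X *ᵥ b = (Y - X *ᵥ β) - X *ᵥ (b - β) := by rw [mulVec_sub]; abel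
  have hcross : (Y - X *ᵥ β) ⬝ᵥ (X *ᵥ (b - β)) = π ⬝ᵥ b - π ⬝ᵥ β := by
    rw [dotProduct_mulVec, ← mulVec_transpose, h, dotProduct_sub]
  have hsq : 0 ≤ (X *ᵥ (b - β)) ⬝ᵥ (X *ᵥ (b - β)) :=
    Finset.sum_nonneg fun i _ => mul_self_nonneg _
  rw [lagrangian, lagrangian, hsplit]
  generalize Y - X *ᵥ β = u at hcross ⊢
  generalize X *ᵥ (b - β) = d at hcross hsq ⊢
  rw [dotProduct_sub, sub_dotProduct, sub_dotProduct, dotProduct_comm d u, hcross]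
  linarith

end Lagrangian

theorem dual_minimizer_saddle_point {n p : ℕ} (hp : 0 < p)
    (X : Matrix (Fin n) (Fin p) ℝ) (Y : Fin n → ℝ) (hX : IsUnit (Xᵀ * X).det)
    (Λ : Fin p → ℝ) (hΛnonneg : ∀ i, 0 ≤ Λ i)
    (hlam1 : 0 < Λ ⟨0, hp⟩)
    (M : Set (Fin p → ℝ))
    (hM : M = {b | ∑ i, (b i) ^ 2 ≤ (p : ℝ) * (∑ i, (Y i) ^ 2) ^ 2 / (4 * (Λ ⟨0, hp⟩) ^ 2)})
    (r : (Fin p → ℝ) → (Fin p → ℝ) → ℝ)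
    (hr : r = fun b π => (1 / 2) * ∑ i, (Y i - (X *ᵥ b) i) ^ 2 + ∑ i, π i * b i)
    (πstar : Fin p → ℝ) (hmem : πstar ∈ dualBall Λ)
    (hmin : ∀ π ∈ dualBall Λ,
      (Xᵀ *ᵥ Y - πstar) ⬝ᵥ ((Xᵀ * X)⁻¹ *ᵥ (Xᵀ *ᵥ Y - πstar)) ≤
        (Xᵀ *ᵥ Y - π) ⬝ᵥ ((Xᵀ * X)⁻¹ *ᵥ (Xᵀ *ᵥ Y - π)))
    (βstar : Fin p → ℝ) (hβ : βstar = (Xᵀ * X)⁻¹ *ᵥ (Xᵀ *ᵥ Y - πstar)) :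
    βstar ∈ M ∧
    (∀ π ∈ dualBall Λ, r βstar π ≤ r βstar πstar) ∧
    (∀ b ∈ M, r βstar πstar ≤ r b πstar) := by
  obtain rfl : r = lagrangian X Y := hr.trans (by funext b π; simp [lagrangian, dotProduct, sq])
  have hnormal : Xᵀ *ᵥ (Y - X *ᵥ βstar) = πstar := by
    rw [mulVec_sub, hβ, mulVec_mulVec, mulVec_mulVec, mul_nonsing_inv _ hX, one_mulVec,
      sub_sub_cancel]
  have hdual : ∀ π ∈ dualBall Λ, π ⬝ᵥ βstar ≤ πstar ⬝ᵥ βstar := fun π hπ => by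
    have hsymm : (Xᵀ * X).IsSymm := by rw [IsSymm, transpose_mul, transpose_transpose]
    rw [hβ]
    exact (convex_dualBall Λ).dotProduct_mulVec_sub_le_of_isMinOn hsymm.inv (isMinOn_iff.2 hmin)
      hmem hπ
  have hprimal := lagrangian_le_of_transpose_mulVec_sub_eq hnormal
  refine ⟨?_, fun π hπ => ?_, fun b _ => hprimal b⟩
  · have hbound : ∀ π ∈ dualBall Λ, π ⬝ᵥ βstar ≤ 1 / 2 * (Y ⬝ᵥ Y) := fun π hπ =>
      ((hdual π hπ).trans (dotProduct_le_lagrangian X Y _ _)).trans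
        ((hprimal 0).trans_eq (lagrangian_zero X Y _))
    have hYY : Y ⬝ᵥ Y = ∑ i, Y i ^ 2 := by simp [dotProduct, sq]
    rw [hM, Set.mem_ofPred_eq]
    convert sum_sq_le_of_forall_dualBall_dotProduct_le hp hΛnonneg hlam1 hbound using 1
    rw [hYY]
    ring
  · simp only [lagrangian]
    linarith [hdual π hπ]
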